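/- arXiv:1707.09580 — 4 statements merged into one kernel-verified Lean document; each statement's English description precedes it below -/
import Mathlib

section
/- Let b, c > 0 and let s ∈ ℝ satisfy 0 ≤ s ≤ 2. With H₁ = [[1 + bc, −b√c],[−b√c, 1 + b]] and H₀ = diag(1 − s, 1), the amplification matrix G = H₁⁻¹ H₀ satisfies ‖G‖ ≤ 1 in the spectral norm. (This gives conditional strong stability of the explicit diffusion scheme under dτ/h² ≤ 1/2, since then s_D(ξ) = 2(dτ/h²)(1 − cos(ξh)) ∈ [0,2].) -/
open scoped Matrix.Norms.L2Operator

lemma norm_le_one_of_fin_two (A : Matrix (Fin 2) (Fin 2) ℝ)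
    (h : ∀ u v : ℝ, (A 0 0 * u + A 0 1 * v) ^ 2 + (A 1 0 * u + A 1 1 * v) ^ 2
      ≤ u ^ 2 + v ^ 2) : ‖A‖ ≤ 1 := by
  rw [Matrix.cstar_norm_def]
  apply ContinuousLinearMap.opNorm_le_bound _ zero_le_one
  intro x
  rw [one_mul]
  have hx : ∀ j, (Matrix.toEuclideanCLM (n := Fin 2) (𝕜 := ℝ) A x) j = A.mulVec x j := by
    intro j; rfl
  rw [EuclideanSpace.norm_eq, EuclideanSpace.norm_eq]
  apply Real.sqrt_le_sqrt
  simp only [hx, Fin.sum_univ_two, Matrix.mulVec, dotProduct, Real.norm_eq_abs,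
    sq_abs, Fin.sum_univ_two]
  exact h (x 0) (x 1)

theorem stmt_10 (b c s : ℝ) (hb : 0 < b) (hc : 0 < c)
    (hs0 : 0 ≤ s) (hs2 : s ≤ 2)
    (H₁ H₀ : Matrix (Fin 2) (Fin 2) ℝ)
    (hH₁ : H₁ = !![1 + b * c, -(b * Real.sqrt c);
                   -(b * Real.sqrt c), 1 + b])
    (hH₀ : H₀ = !![1 - s, 0; 0, 1]) :
    ‖H₁⁻¹ * H₀‖ ≤ 1 := by
  set t := Real.sqrt c with htdef
  have ht2 : t ^ 2 = c := Real.sq_sqrt hc.le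
  have ht0 : 0 < t := Real.sqrt_pos.mpr hc
  set d := 1 + b + b * c with hddef
  have hd : 0 < d := by nlinarith
  have hdet : H₁.det = d := by
    rw [hH₁, Matrix.det_fin_two_of]; nlinarith [ht2]
  have hinv : H₁⁻¹ = d⁻¹ • !![1 + b, b * t; b * t, 1 + b * c] := by
    rw [Matrix.inv_def, hdet, hH₁, Matrix.adjugate_fin_two_of, Ring.inverse_eq_inv]
    congr 1
    ext i j
    fin_cases i <;> fin_cases j <;> simp
  have hG : H₁⁻¹ * H₀ = d⁻¹ • !![(1 + b) * (1 - s), b * t;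
      b * t * (1 - s), 1 + b * c] := by
    rw [hinv, hH₀, Matrix.smul_mul]
    congr 1
    ext i j
    fin_cases i <;> fin_cases j <;>
      simp [Matrix.mul_apply, Fin.sum_univ_two]
  apply norm_le_one_of_fin_two
  intro u v
  rw [hG]
  set e := d⁻¹ with hedef
  have he : e * d = 1 := inv_mul_cancel₀ hd.ne'
  have he0 : 0 < e := inv_pos.mpr hd
  simp only [Matrix.smul_apply, Matrix.cons_val', Matrix.cons_val_zero, Matrix.cons_val_one,
    Matrix.head_cons, Matrix.head_fin_const, Matrix.empty_val', Matrix.cons_val_fin_one,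
    Matrix.of_apply, smul_eq_mul]
  have hid : ((1+b)*(1-s)*u + b*t*v)^2 + (b*t*(1-s)*u + (1+b*c)*v)^2
      = d^2*((1-s)^2*u^2+v^2) - (d+1)*b*(t*(1-s)*u - v)^2 := by
    simp only [hddef, ← ht2]; ring
  have gap0 : 0 ≤ e^2*((d+1)*b*(t*(1-s)*u - v)^2) := by positivity
  have hr2u : (1-s)^2*u^2 ≤ u^2 := by nlinarith [mul_nonneg (mul_nonneg hs0 (by linarith : (0:ℝ) ≤ 2 - s)) (sq_nonneg u)]
  calc (e * ((1 + b) * (1 - s)) * u + e * (b * t) * v) ^ 2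
        + (e * (b * t * (1 - s)) * u + e * (1 + b * c) * v) ^ 2
      = e^2 * ( ((1+b)*(1-s)*u + b*t*v)^2 + (b*t*(1-s)*u + (1+b*c)*v)^2 ) := by ring
    _ = (e*d)^2 * ((1-s)^2*u^2+v^2) - e^2*((d+1)*b*(t*(1-s)*u - v)^2) := by rw [hid]; ring
    _ = ((1-s)^2*u^2+v^2) - e^2*((d+1)*b*(t*(1-s)*u - v)^2) := by rw [he]; ring
    _ ≤ u^2 + v^2 := by linarith
end

section
/- Let b, c > 0 and let s = λ(1 − e^{−iθ}) with 0 ≤ λ ≤ 1 and θ ∈ ℝ. Then |1 − s| ≤ 1, and consequently, with H₁ = [[1 + bc, −b√c],[−b√c, 1 + b]] and H₀ = diag(1 − s, 1) (viewed as complex matrices), the amplification matrix G = H₁⁻¹H₀ satisfies ‖G‖ ≤ 1 in the spectral norm. -/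
open scoped Matrix.Norms.L2Operator
open Complex

lemma aux_norm_le_one (A : Matrix (Fin 2) (Fin 2) ℂ)
    (h : ∀ x : Fin 2 → ℂ,
      ‖A 0 0 * x 0 + A 0 1 * x 1‖ ^ 2
        + ‖A 1 0 * x 0 + A 1 1 * x 1‖ ^ 2
        ≤ ‖x 0‖ ^ 2 + ‖x 1‖ ^ 2) : ‖A‖ ≤ 1 := by
  rw [Matrix.l2_opNorm_def]
  apply ContinuousLinearMap.opNorm_le_bound _ zero_le_one
  intro x
  rw [one_mul]
  have hx : ((LinearEquiv.trans Matrix.toEuclideanLin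
      LinearMap.toContinuousLinearMap A) x : EuclideanSpace ℂ (Fin 2))
      = (WithLp.equiv 2 (Fin 2 → ℂ)).symm (A.mulVec ((WithLp.equiv 2 (Fin 2 → ℂ)) x)) := rfl
  rw [hx, EuclideanSpace.norm_eq, EuclideanSpace.norm_eq]
  apply Real.sqrt_le_sqrt
  simpa [Fin.sum_univ_two, Matrix.mulVec, dotProduct, Fin.sum_univ_two,
    ] using h ((WithLp.equiv 2 (Fin 2 → ℂ)) x)

lemma aux_key (b r a u v : ℝ) (hb : 0 < b) (hr : 0 ≤ r) (ha : 0 ≤ a) (ha1 : a ≤ 1)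
    (hu : 0 ≤ u) (hv : 0 ≤ v) :
    ((1+b)*(a*u) + b*r*v)^2 + (b*r*(a*u) + (1+b*(r*r))*v)^2
      ≤ (1+b+b*(r*r))^2*(u^2+v^2) := by
  have h1 : ((1+b)*u + b*r*v)^2 + (b*r*u + (1+b*(r*r))*v)^2 ≤ (1+b+b*(r*r))^2*(u^2+v^2) := by
    nlinarith [mul_nonneg hb.le (sq_nonneg (v - r*u)),
      mul_nonneg (mul_nonneg hb.le hb.le) (sq_nonneg (v - r*u)),
      mul_nonneg (mul_nonneg (mul_nonneg hb.le hb.le) (mul_nonneg hr hr)) (sq_nonneg (v - r*u))]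
  have h2 : ((1+b)*(a*u) + b*r*v)^2 + (b*r*(a*u) + (1+b*(r*r))*v)^2
      ≤ ((1+b)*u + b*r*v)^2 + (b*r*u + (1+b*(r*r))*v)^2 := by
    nlinarith [mul_nonneg (sub_nonneg.2 ha1) (mul_nonneg hu hv),
      mul_nonneg (mul_nonneg (sub_nonneg.2 ha1) (add_nonneg ha zero_le_one)) (sq_nonneg u),
      mul_nonneg hu hv, sq_nonneg u, mul_nonneg hb.le hr, mul_nonneg ha hu,
      mul_nonneg (mul_nonneg hb.le hr) (mul_nonneg hu hv),
      mul_nonneg (mul_nonneg (mul_nonneg hb.le hr) (mul_nonneg hb.le hr)) (mul_nonneg hu hv),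
      mul_nonneg (mul_nonneg (sub_nonneg.2 ha1) (mul_nonneg (mul_nonneg hb.le hr) hb.le)) (mul_nonneg hu hv),
      mul_nonneg (mul_nonneg (mul_nonneg (sub_nonneg.2 ha1) (add_nonneg ha zero_le_one)) (mul_nonneg hb.le hb.le)) (sq_nonneg u),
      mul_nonneg (mul_nonneg (mul_nonneg (sub_nonneg.2 ha1) (add_nonneg ha zero_le_one)) (mul_nonneg (mul_nonneg hb.le hr) (mul_nonneg hb.le hr))) (sq_nonneg u)]
  linarith

theorem stmt_11 (b c lam θ : ℝ) (hb : 0 < b) (hc : 0 < c)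
    (hlam0 : 0 ≤ lam) (hlam1 : lam ≤ 1)
    (s : ℂ) (hs : s = lam * (1 - Complex.exp (-(θ : ℂ) * I)))
    (H₁ H₀ : Matrix (Fin 2) (Fin 2) ℂ)
    (hH₁ : H₁ = !![(1 + b * c : ℂ), (-(b * Real.sqrt c) : ℝ);
                   ((-(b * Real.sqrt c) : ℝ) : ℂ), (1 + b : ℂ)])
    (hH₀ : H₀ = !![1 - s, 0; 0, 1]) :
    ‖1 - s‖ ≤ 1 ∧ ‖H₁⁻¹ * H₀‖ ≤ 1 := by
  have habs : ‖1 - s‖ ≤ 1 := by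
    have hre : (1 - s).re = 1 - lam * (1 - Real.cos θ) := by
      simp [hs, Complex.exp_re, Complex.exp_im]
    have him : (1 - s).im = -(lam * Real.sin θ) := by
      simp [hs, Complex.exp_re, Complex.exp_im]
    have hp := Real.sin_sq_add_cos_sq θ
    rw [show (1:ℝ) = Real.sqrt 1 by simp, Complex.norm_def]
    apply Real.sqrt_le_sqrt
    rw [Complex.normSq_apply, hre, him]
    have hkey : (1 - lam*(1-Real.cos θ))*(1 - lam*(1-Real.cos θ))
        + -(lam*Real.sin θ) * -(lam*Real.sin θ)
        = 1 - 2*(lam*(1-lam)*(1-Real.cos θ)) := by linear_combination lam^2 * hp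
    rw [hkey]
    nlinarith [mul_nonneg (mul_nonneg hlam0 (sub_nonneg.2 hlam1))
      (sub_nonneg.2 (Real.cos_le_one θ))]
  refine ⟨habs, ?_⟩
  set r : ℝ := Real.sqrt c with hrdef
  have hr0 : 0 ≤ r := Real.sqrt_nonneg c
  have hrsq : r * r = c := Real.mul_self_sqrt hc.le
  have hd0 : (0:ℝ) < 1 + b + b * c := by positivity
  have hrc : (r:ℂ) * (r:ℂ) = (c:ℂ) := by exact_mod_cast congrArg Complex.ofReal hrsq
  have hd2 : (1:ℂ) + (b:ℂ) + (b:ℂ)*(c:ℂ) ≠ 0 := by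
    exact_mod_cast (Complex.ofReal_ne_zero.2 hd0.ne')
  have hd4 : (1:ℂ) + (b:ℂ) + (b:ℂ)*((r:ℂ)*(r:ℂ)) ≠ 0 := by rw [hrc]; exact hd2
  have hinv : H₁⁻¹ = (((1+b+b*c:ℝ):ℂ))⁻¹ •
      !![((1+b:ℝ):ℂ), ((b*r:ℝ):ℂ); ((b*r:ℝ):ℂ), ((1+b*c:ℝ):ℂ)] := by
    apply Matrix.inv_eq_right_inv
    rw [hH₁]
    ext i j
    fin_cases i <;> fin_cases j <;>
      simp [Matrix.mul_apply, Fin.sum_univ_two] <;>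
      push_cast <;>
      try rw [show (c:ℂ) = _ from hrc.symm]
    · field_simp [show (1:ℂ) + b + b * r^2 ≠ 0 by rw [sq]; exact hd4]; try ring
    · ring
    · ring
    · field_simp [show (1:ℂ) + b + b * r^2 ≠ 0 by rw [sq]; exact hd4]; try ring
  have hG : H₁⁻¹ * H₀ = (((1+b+b*c:ℝ):ℂ))⁻¹ •
      !![((1+b:ℝ):ℂ) * (1 - s), ((b*r:ℝ):ℂ); ((b*r:ℝ):ℂ) * (1 - s), ((1+b*c:ℝ):ℂ)] := by
    rw [hinv, hH₀, Matrix.smul_mul]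
    congr 1
    ext i j
    fin_cases i <;> fin_cases j <;> simp [Matrix.mul_apply, Fin.sum_univ_two]
  rw [hG]
  apply aux_norm_le_one
  intro x
  simp only [Matrix.smul_apply, Matrix.cons_val', Matrix.cons_val_zero, Matrix.cons_val_one,
    Matrix.head_cons, Matrix.head_fin_const, Matrix.empty_val', Matrix.cons_val_fin_one,
    smul_eq_mul]
  set u : ℝ := ‖x 0‖ with hu
  set v : ℝ := ‖x 1‖ with hv
  have hu0 : 0 ≤ u := norm_nonneg _
  have hv0 : 0 ≤ v := norm_nonneg _
  set a : ℝ := ‖1 - s‖ with ha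
  have ha0 : 0 ≤ a := norm_nonneg _
  have hda : ‖(((1+b+b*c:ℝ):ℂ))⁻¹‖ = (1+b+b*c)⁻¹ := by
    rw [norm_inv, Complex.norm_real, Real.norm_eq_abs, abs_of_pos hd0]
  have hb1 : ‖((1+b:ℝ):ℂ) * (1 - s) * x 0 + ((b*r:ℝ):ℂ) * x 1‖
      ≤ (1+b)*(a*u) + b*r*v := by
    refine (norm_add_le _ _).trans ?_
    simp only [norm_mul, Complex.norm_real, Real.norm_eq_abs, ← abs_mul]
    rw [_root_.abs_of_pos (by positivity : (0:ℝ) < 1+b), _root_.abs_of_nonneg (by positivity : (0:ℝ) ≤ b*r)]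
    rw [← ha, ← hu, ← hv]
    exact le_of_eq (by ring)
  have hb2 : ‖((b*r:ℝ):ℂ) * (1 - s) * x 0 + ((1+b*c:ℝ):ℂ) * x 1‖
      ≤ b*r*(a*u) + (1+b*c)*v := by
    refine (norm_add_le _ _).trans ?_
    simp only [norm_mul, Complex.norm_real, Real.norm_eq_abs, ← abs_mul]
    rw [_root_.abs_of_nonneg (by positivity : (0:ℝ) ≤ b*r), _root_.abs_of_pos (by positivity : (0:ℝ) < 1+b*c)]
    rw [← ha, ← hu, ← hv]
    exact le_of_eq (by ring)
  have hkey := aux_key b r a u v hb hr0 ha0 habs hu0 hv0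
  rw [hrsq] at hkey
  have final : ∀ A1 A2 B1 B2 : ℝ, 0 ≤ A1 → 0 ≤ A2 → A1 ≤ B1 → A2 ≤ B2 →
      B1^2+B2^2 ≤ (1+b+b*c)^2*(u^2+v^2) →
      ((1+b+b*c)⁻¹*A1)^2 + ((1+b+b*c)⁻¹*A2)^2 ≤ u^2+v^2 := by
    intro A1 A2 B1 B2 h1 h2 h3 h4 h5
    have e1 : A1^2 ≤ B1^2 := pow_le_pow_left₀ h1 h3 2
    have e2 : A2^2 ≤ B2^2 := pow_le_pow_left₀ h2 h4 2
    have e3 : ((1+b+b*c)⁻¹)^2 * ((1+b+b*c)^2*(u^2+v^2)) = u^2+v^2 := by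
      field_simp
    calc ((1+b+b*c)⁻¹*A1)^2 + ((1+b+b*c)⁻¹*A2)^2
        = ((1+b+b*c)⁻¹)^2*(A1^2+A2^2) := by ring
      _ ≤ ((1+b+b*c)⁻¹)^2 * ((1+b+b*c)^2*(u^2+v^2)) :=
          mul_le_mul_of_nonneg_left (le_trans (add_le_add e1 e2) h5) (sq_nonneg _)
      _ = u^2+v^2 := e3
  have hsplit1 : ((1+b+b*c:ℝ):ℂ)⁻¹ * (((1+b:ℝ):ℂ)*(1-s)) * x 0
      + ((1+b+b*c:ℝ):ℂ)⁻¹ * ((b*r:ℝ):ℂ) * x 1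
      = ((1+b+b*c:ℝ):ℂ)⁻¹ * (((1+b:ℝ):ℂ)*(1-s)*x 0 + ((b*r:ℝ):ℂ)*x 1) := by ring
  have hsplit2 : ((1+b+b*c:ℝ):ℂ)⁻¹ * (((b*r:ℝ):ℂ)*(1-s)) * x 0
      + ((1+b+b*c:ℝ):ℂ)⁻¹ * ((1+b*c:ℝ):ℂ) * x 1
      = ((1+b+b*c:ℝ):ℂ)⁻¹ * (((b*r:ℝ):ℂ)*(1-s)*x 0 + ((1+b*c:ℝ):ℂ)*x 1) := by ring
  have E00 : !![((1+b:ℝ):ℂ) * (1 - s), ((b*r:ℝ):ℂ); ((b*r:ℝ):ℂ) * (1 - s), ((1+b*c:ℝ):ℂ)] 0 0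
      = ((1+b:ℝ):ℂ) * (1 - s) := rfl
  have E01 : !![((1+b:ℝ):ℂ) * (1 - s), ((b*r:ℝ):ℂ); ((b*r:ℝ):ℂ) * (1 - s), ((1+b*c:ℝ):ℂ)] 0 1
      = ((b*r:ℝ):ℂ) := rfl
  have E10 : !![((1+b:ℝ):ℂ) * (1 - s), ((b*r:ℝ):ℂ); ((b*r:ℝ):ℂ) * (1 - s), ((1+b*c:ℝ):ℂ)] 1 0
      = ((b*r:ℝ):ℂ) * (1 - s) := rfl
  have E11 : !![((1+b:ℝ):ℂ) * (1 - s), ((b*r:ℝ):ℂ); ((b*r:ℝ):ℂ) * (1 - s), ((1+b*c:ℝ):ℂ)] 1 1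
      = ((1+b*c:ℝ):ℂ) := rfl
  rw [E00, E01, E10, E11, hsplit1, hsplit2, norm_mul, norm_mul, hda]
  exact final _ _ _ _ (norm_nonneg _) (norm_nonneg _) hb1 hb2 hkey
end

section
/- Let H = ℝ^P with the standard inner product, let L : H → H be linear, let g : ℝ → ℝ be monotone increasing with primitive G (G' = g), applied componentwise, and let α > 0. Suppose ⟨L u, g(u)⟩ ≥ 0 for all u ∈ H. If (U,V) : [0,T] → H × H is differentiable and satisfies U' − α(V − g(U)) + L U = 0 and V' + α(V − g(U)) = 0, then the function t ↦ Σⱼ G(Uⱼ(t)) + ½‖V(t)‖² is nonincreasing; indeed its derivative equals −α‖V − g(U)‖² − ⟨LU, g(U)⟩ ≤ 0. -/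
open scoped RealInnerProductSpace

/-- Componentwise application of `g : ℝ → ℝ` to a vector in `ℝ^P`. -/
noncomputable def compApply (P : ℕ) (g : ℝ → ℝ) (u : EuclideanSpace ℝ (Fin P)) :
    EuclideanSpace ℝ (Fin P) :=
  (WithLp.equiv 2 (Fin P → ℝ)).symm fun j => g (u j)

theorem stmt_12 (P : ℕ) (L : EuclideanSpace ℝ (Fin P) →ₗ[ℝ] EuclideanSpace ℝ (Fin P))
    (g : ℝ → ℝ) (hg : Monotone g)
    (G : ℝ → ℝ) (hG : ∀ r : ℝ, HasDerivAt G (g r) r)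
    (α : ℝ) (hα : 0 < α)
    (hLg : ∀ u : EuclideanSpace ℝ (Fin P), 0 ≤ ⟪L u, compApply P g u⟫)
    (T : ℝ) (hT : 0 < T)
    (U V U' V' : ℝ → EuclideanSpace ℝ (Fin P))
    (hU : ∀ t, HasDerivAt U (U' t) t) (hV : ∀ t, HasDerivAt V (V' t) t)
    (heq1 : ∀ t ∈ Set.Icc (0 : ℝ) T,
      U' t - α • (V t - compApply P g (U t)) + L (U t) = 0)
    (heq2 : ∀ t ∈ Set.Icc (0 : ℝ) T,
      V' t + α • (V t - compApply P g (U t)) = 0)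
    (E : ℝ → ℝ)
    (hE : E = fun t => (∑ j : Fin P, G (U t j)) + (1 / 2) * ‖V t‖ ^ 2) :
    (∀ t ∈ Set.Icc (0 : ℝ) T,
      HasDerivAt E
        (-(α * ‖V t - compApply P g (U t)‖ ^ 2) - ⟪L (U t), compApply P g (U t)⟫) t ∧
      -(α * ‖V t - compApply P g (U t)‖ ^ 2) - ⟪L (U t), compApply P g (U t)⟫ ≤ 0) ∧
    AntitoneOn E (Set.Icc 0 T) := by
  -- derivative of E everywhere
  have key : ∀ t, HasDerivAt E (⟪compApply P g (U t), U' t⟫ + ⟪V' t, V t⟫) t := by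
    intro t
    rw [hE]
    have h1 : HasDerivAt (fun t => ∑ j : Fin P, G (U t j))
        (∑ j : Fin P, g (U t j) * U' t j) t := by
      apply HasDerivAt.fun_sum
      intro j _
      have hcoord : HasDerivAt (fun t => U t j) (U' t j) t := by
        have := (EuclideanSpace.proj (𝕜 := ℝ) j).hasFDerivAt.comp_hasDerivAt t (hU t)
        exact this
      exact (hG (U t j)).comp t hcoord
    have h2 : HasDerivAt (fun t => (1 / 2 : ℝ) * ‖V t‖ ^ 2) (⟪V' t, V t⟫) t := by
      have hin : HasDerivAt (fun t => ⟪V t, V t⟫)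
          (⟪V t, V' t⟫ + ⟪V' t, V t⟫) t := (hV t).inner ℝ (hV t)
      have heqf : (fun t => (1 / 2 : ℝ) * ‖V t‖ ^ 2) = fun t => (1 / 2 : ℝ) * ⟪V t, V t⟫ := by
        funext s; rw [real_inner_self_eq_norm_sq]
      rw [heqf]
      have := hin.const_mul (1 / 2 : ℝ)
      rw [real_inner_comm (V' t) (V t)] at this
      exact this.congr_deriv (by ring)
    have hsum : (∑ j : Fin P, g (U t j) * U' t j) = ⟪compApply P g (U t), U' t⟫ := by
      simp [compApply, PiLp.inner_apply, RCLike.inner_apply, map_mul]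
      exact Finset.sum_congr rfl (fun _ _ => mul_comm _ _)
    rw [← hsum]
    exact h1.add h2
  have main : ∀ t ∈ Set.Icc (0 : ℝ) T,
      HasDerivAt E
        (-(α * ‖V t - compApply P g (U t)‖ ^ 2) - ⟪L (U t), compApply P g (U t)⟫) t ∧
      -(α * ‖V t - compApply P g (U t)‖ ^ 2) - ⟪L (U t), compApply P g (U t)⟫ ≤ 0 := by
    intro t ht
    set a := compApply P g (U t) with ha
    set w := V t - a with hw
    have hU' : U' t = α • w - L (U t) := by
      have h := heq1 t ht
      have h2 : U' t - (α • w - L (U t)) = 0 := by rw [← h]; abel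
      exact sub_eq_zero.mp h2
    have hV' : V' t = -(α • w) := by
      have h := heq2 t ht
      exact eq_neg_of_add_eq_zero_left h
    have hval : ⟪a, U' t⟫ + ⟪V' t, V t⟫
        = -(α * ‖w‖ ^ 2) - ⟪L (U t), a⟫ := by
      rw [hU', hV']
      have hVt : V t = w + a := by rw [hw]; abel
      rw [hVt]
      rw [inner_sub_right, real_inner_smul_right, inner_neg_left, inner_add_right,
        real_inner_smul_left, real_inner_smul_left, real_inner_self_eq_norm_sq,
        real_inner_comm a w, real_inner_comm a (L (U t))]
      ring
    constructor
    · have := key t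
      rwa [hval] at this
    · have h1 := hLg (U t)
      have h2 : 0 ≤ α * ‖w‖ ^ 2 := mul_nonneg hα.le (sq_nonneg _)
      linarith
  refine ⟨main, ?_⟩
  apply antitoneOn_of_deriv_nonpos (convex_Icc 0 T)
  · exact fun t _ => (key t).continuousAt.continuousWithinAt
  · exact fun t _ => ((key t).differentiableAt).differentiableWithinAt
  · intro t ht
    rw [interior_Icc] at ht
    have htIcc : t ∈ Set.Icc (0 : ℝ) T := ⟨ht.1.le, ht.2.le⟩
    rw [((main t htIcc).1).deriv]
    exact (main t htIcc).2
end

section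
/- Let L_h ∈ ℝ^{P×P} be symmetric with eigenvalues λ₁,…,λ_P, and let b, c > 0. Consider the 2P×2P block matrices H₁ = [[(1+bc)I, −b√c I],[−b√c I, (1+b)I]] and H₀ = [[I − L_h, 0],[0, I]]. If 0 ≤ λ_p ≤ 2 for all p, then every eigenvalue of H₀ lies in [−1,1], H₁ is symmetric positive definite with smallest eigenvalue 1, and consequently the iteration H₁ Wⁿ = H₀ Wⁿ⁻¹ satisfies ‖Wⁿ‖ ≤ ‖Wⁿ⁻¹‖ in the Euclidean norm. -/
open Matrix

lemma contract_aux (P : ℕ) (Lh : Matrix (Fin P) (Fin P) ℝ) (hLh : Lh.IsHermitian)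
    (hspec : ∀ i, hLh.eigenvalues i ∈ Set.Icc (0:ℝ) 2) (x : Fin P → ℝ) :
    ((1 - Lh) *ᵥ x) ⬝ᵥ ((1 - Lh) *ᵥ x) ≤ x ⬝ᵥ x := by
  classical
  set U : Matrix (Fin P) (Fin P) ℝ := (hLh.eigenvectorUnitary : Matrix (Fin P) (Fin P) ℝ) with hUdef
  set D : Matrix (Fin P) (Fin P) ℝ := diagonal hLh.eigenvalues with hDdef
  have hspec' : Lh = U * D * star U := by
    have := hLh.spectral_theorem
    simpa [hUdef, hDdef, Function.comp] using this
  have hUU : star U * U = 1 := (Unitary.mem_iff.mp (hLh.eigenvectorUnitary).2).1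
  have hmid : ∀ X : Matrix (Fin P) (Fin P) ℝ, star U * (U * X) = X := fun X => by
    rw [← mul_assoc, hUU, one_mul]
  have hAA : (U*D*star U) * (U*D*star U) = U * (D*D) * star U := by
    simp only [mul_assoc]
    rw [hmid]
  have hkey : (1 : Matrix (Fin P) (Fin P) ℝ) - (1 - Lh) * (1 - Lh)
      = U * (D + D - D * D) * star U := by
    have h1 : (1 : Matrix (Fin P) (Fin P) ℝ) - (1 - Lh) * (1 - Lh)
        = Lh + Lh - Lh * Lh := by noncomm_ring
    rw [h1, hspec', hAA]
    noncomm_ring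
  have hdiag : D + D - D * D = diagonal (fun i => hLh.eigenvalues i + hLh.eigenvalues i
      - hLh.eigenvalues i * hLh.eigenvalues i) := by
    simp [hDdef, diagonal_add, diagonal_mul_diagonal, diagonal_sub]
  have hM : (diagonal (fun i => hLh.eigenvalues i + hLh.eigenvalues i
      - hLh.eigenvalues i * hLh.eigenvalues i)).PosSemidef := by
    rw [posSemidef_diagonal_iff]
    intro i
    obtain ⟨h0, h2⟩ := hspec i
    nlinarith
  have hPSD : ((1 : Matrix (Fin P) (Fin P) ℝ) - (1 - Lh) * (1 - Lh)).PosSemidef := by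
    rw [hkey, hdiag]
    have := hM.mul_mul_conjTranspose_same U
    simpa [Matrix.star_eq_conjTranspose] using this
  have h2 := hPSD.dotProduct_mulVec_nonneg x
  have hident : star x ⬝ᵥ (((1 : Matrix (Fin P) (Fin P) ℝ) - (1 - Lh) * (1 - Lh)) *ᵥ x)
      = x ⬝ᵥ x - ((1 - Lh) *ᵥ x) ⬝ᵥ ((1 - Lh) *ᵥ x) := by
    have hsym : (1 - Lh)ᵀ = 1 - Lh := by
      rw [← conjTranspose_eq_transpose_of_trivial]
      exact ((Matrix.isHermitian_one).sub hLh).eq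
    rw [show (star x : Fin P → ℝ) = x from star_trivial x]
    rw [Matrix.sub_mulVec, Matrix.one_mulVec, dotProduct_sub]
    congr 1
    rw [← Matrix.mulVec_mulVec, Matrix.dotProduct_mulVec]
    rw [← Matrix.mulVec_transpose, hsym]
  rw [hident] at h2
  linarith

theorem stmt_17 (P : ℕ) (hP : 1 ≤ P)
    (Lh : Matrix (Fin P) (Fin P) ℝ) (hLh : Lh.IsHermitian)
    (b c : ℝ) (hb : 0 < b) (hc : 0 < c)
    (hspec : ∀ i, hLh.eigenvalues i ∈ Set.Icc (0 : ℝ) 2)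
    (H₁ H₀ : Matrix (Fin P ⊕ Fin P) (Fin P ⊕ Fin P) ℝ)
    (hH₁ : H₁ = Matrix.fromBlocks ((1 + b * c) • (1 : Matrix (Fin P) (Fin P) ℝ))
        ((-(b * Real.sqrt c)) • (1 : Matrix (Fin P) (Fin P) ℝ))
        ((-(b * Real.sqrt c)) • (1 : Matrix (Fin P) (Fin P) ℝ))
        ((1 + b) • (1 : Matrix (Fin P) (Fin P) ℝ)))
    (hH₀ : H₀ = Matrix.fromBlocks (1 - Lh) 0 0 1) :
    (∀ μ : ℝ, Module.End.HasEigenvalue (Matrix.toLin' H₀) μ → μ ∈ Set.Icc (-1 : ℝ) 1) ∧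
    H₁.PosDef ∧
    Module.End.HasEigenvalue (Matrix.toLin' H₁) 1 ∧
    (∀ μ : ℝ, Module.End.HasEigenvalue (Matrix.toLin' H₁) μ → 1 ≤ μ) ∧
    (∀ W W' : EuclideanSpace ℝ (Fin P ⊕ Fin P),
      H₁.mulVec W' = H₀.mulVec W → ‖W'‖ ≤ ‖W‖) := by
  classical
  set s : ℝ := Real.sqrt c with hsdef
  have hs : s * s = c := Real.mul_self_sqrt hc.le
  -- mulVec formulas
  have hm1 : ∀ v : Fin P ⊕ Fin P → ℝ, H₁ *ᵥ v
      = Sum.elim (fun i => (1 + b*c) * v (Sum.inl i) - b*s * v (Sum.inr i))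
        (fun i => -(b*s) * v (Sum.inl i) + (1+b) * v (Sum.inr i)) := by
    intro v
    rw [hH₁, ← Sum.elim_comp_inl_inr v, Matrix.fromBlocks_mulVec]
    ext j
    cases j with
    | inl i =>
      simp [Matrix.neg_mulVec, Matrix.smul_mulVec, Matrix.one_mulVec]
      ring
    | inr i =>
      simp [Matrix.neg_mulVec, Matrix.smul_mulVec, Matrix.one_mulVec]
      try ring
  have hm0 : ∀ v : Fin P ⊕ Fin P → ℝ, H₀ *ᵥ v
      = Sum.elim ((1 - Lh) *ᵥ (v ∘ Sum.inl)) (v ∘ Sum.inr) := by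
    intro v
    rw [hH₀, ← Sum.elim_comp_inl_inr v, Matrix.fromBlocks_mulVec]
    simp
  have hdot : ∀ u w : Fin P ⊕ Fin P → ℝ, u ⬝ᵥ w
      = ∑ i, (u (Sum.inl i) * w (Sum.inl i) + u (Sum.inr i) * w (Sum.inr i)) := by
    intro u w
    rw [dotProduct, Fintype.sum_sum_type, ← Finset.sum_add_distrib]
  have hposv : ∀ v : Fin P ⊕ Fin P → ℝ, v ≠ 0 → 0 < v ⬝ᵥ v := by
    intro v hv
    obtain ⟨j, hj⟩ := Function.ne_iff.mp hv
    exact Finset.sum_pos' (fun k _ => mul_self_nonneg _)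
      ⟨j, Finset.mem_univ j, mul_self_pos.mpr hj⟩
  have key2 : ∀ v : Fin P ⊕ Fin P → ℝ, v ⬝ᵥ v ≤ v ⬝ᵥ (H₁ *ᵥ v) := by
    intro v
    rw [hdot, hdot, hm1 v]
    simp only [Sum.elim_inl, Sum.elim_inr]
    apply Finset.sum_le_sum
    intro i _
    set a := v (Sum.inl i)
    set d := v (Sum.inr i)
    have hid : a * ((1 + b*c) * a - b*s * d) + d * (-(b*s) * a + (1+b) * d)
        - (a * a + d * d) = b * (s*a - d)^2 := by
      rw [← hs]; ring
    nlinarith [mul_nonneg hb.le (sq_nonneg (s*a - d))]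
  have key1 : ∀ v : Fin P ⊕ Fin P → ℝ, v ⬝ᵥ v ≤ (H₁ *ᵥ v) ⬝ᵥ (H₁ *ᵥ v) := by
    intro v
    rw [hdot, hdot, hm1 v]
    simp only [Sum.elim_inl, Sum.elim_inr]
    apply Finset.sum_le_sum
    intro i _
    set a := v (Sum.inl i)
    set d := v (Sum.inr i)
    have hid : ((1 + b*c) * a - b*s * d) * ((1 + b*c) * a - b*s * d)
        + (-(b*s) * a + (1+b) * d) * (-(b*s) * a + (1+b) * d)
        - (a * a + d * d) = (2*b + b*b*(c+1)) * (s*a - d)^2 := by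
      rw [← hs]; ring
    nlinarith [mul_nonneg (by nlinarith : (0:ℝ) ≤ 2*b + b*b*(c+1)) (sq_nonneg (s*a - d))]
  have key0 : ∀ v : Fin P ⊕ Fin P → ℝ, (H₀ *ᵥ v) ⬝ᵥ (H₀ *ᵥ v) ≤ v ⬝ᵥ v := by
    intro v
    calc (H₀ *ᵥ v) ⬝ᵥ (H₀ *ᵥ v)
        = ((1 - Lh) *ᵥ (v ∘ Sum.inl)) ⬝ᵥ ((1 - Lh) *ᵥ (v ∘ Sum.inl))
          + (v ∘ Sum.inr) ⬝ᵥ (v ∘ Sum.inr) := by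
          rw [hm0 v, sumElim_dotProduct_sumElim]
      _ ≤ (v ∘ Sum.inl) ⬝ᵥ (v ∘ Sum.inl) + (v ∘ Sum.inr) ⬝ᵥ (v ∘ Sum.inr) :=
          add_le_add_left (contract_aux P Lh hLh hspec _) _
      _ = v ⬝ᵥ v := by
          conv_rhs => rw [← Sum.elim_comp_inl_inr v]
          rw [sumElim_dotProduct_sumElim]
  have hherm : H₁.IsHermitian := by
    show H₁ᴴ = H₁
    rw [hH₁, Matrix.fromBlocks_conjTranspose]
    simp
  have hPD : H₁.PosDef := by
    refine Matrix.PosDef.of_dotProduct_mulVec_pos hherm (fun x hx => ?_)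
    rw [show (star x : Fin P ⊕ Fin P → ℝ) = x from star_trivial x]
    exact lt_of_lt_of_le (hposv x hx) (key2 x)
  refine ⟨?_, hPD, ?_, ?_, ?_⟩
  · -- eigenvalues of H₀ in [-1,1]
    intro μ hμ
    obtain ⟨v, hv⟩ := hμ.exists_hasEigenvector
    have hv1 : H₀ *ᵥ v = μ • v := by
      rw [← Matrix.toLin'_apply]
      exact Module.End.mem_eigenspace_iff.mp hv.1
    have h := key0 v
    rw [hv1] at h
    have hexp : (μ • v) ⬝ᵥ (μ • v) = μ * (μ * (v ⬝ᵥ v)) := by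
      rw [smul_dotProduct, dotProduct_smul, smul_eq_mul, smul_eq_mul]
    rw [hexp] at h
    have hp := hposv v hv.2
    constructor
    · nlinarith [sq_nonneg (μ + 1)]
    · nlinarith [sq_nonneg (μ - 1)]
  · -- eigenvalue 1 of H₁
    set i0 : Fin P := ⟨0, hP⟩
    set e : Fin P → ℝ := Pi.single i0 1 with hedef
    set v : Fin P ⊕ Fin P → ℝ := Sum.elim e (fun i => s * e i) with hvdef
    have hv : H₁ *ᵥ v = v := by
      rw [hm1 v]
      ext j
      cases j with
      | inl i =>
        show (1 + b*c) * e i - b*s * (s * e i) = e i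
        rw [← hs]; ring
      | inr i =>
        show -(b*s) * e i + (1+b) * (s * e i) = s * e i
        ring
    have hv0 : v ≠ 0 := by
      intro h
      have := congrFun h (Sum.inl i0)
      simp [hvdef, hedef, Pi.single_eq_same] at this
    exact Module.End.hasEigenvalue_of_hasEigenvector
      ⟨Module.End.mem_eigenspace_iff.mpr (by rw [Matrix.toLin'_apply, hv, one_smul]), hv0⟩
  · -- eigenvalues of H₁ at least 1
    intro μ hμ
    obtain ⟨v, hv⟩ := hμ.exists_hasEigenvector
    have hv1 : H₁ *ᵥ v = μ • v := by
      rw [← Matrix.toLin'_apply]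
      exact Module.End.mem_eigenspace_iff.mp hv.1
    have h := key2 v
    rw [hv1, dotProduct_smul, smul_eq_mul] at h
    have hp := hposv v hv.2
    nlinarith
  · -- norm inequality
    intro W W' hWW
    have h1 : (W' : Fin P ⊕ Fin P → ℝ) ⬝ᵥ W' ≤ (W : Fin P ⊕ Fin P → ℝ) ⬝ᵥ W := by
      calc (W' : Fin P ⊕ Fin P → ℝ) ⬝ᵥ W' ≤ (H₁ *ᵥ W') ⬝ᵥ (H₁ *ᵥ W') := key1 W'
        _ = (H₀ *ᵥ W) ⬝ᵥ (H₀ *ᵥ W) := by rw [hWW]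
        _ ≤ (W : Fin P ⊕ Fin P → ℝ) ⬝ᵥ W := key0 W
    have hnorm : ∀ u : EuclideanSpace ℝ (Fin P ⊕ Fin P),
        ∑ j, ‖u j‖^2 = (u : Fin P ⊕ Fin P → ℝ) ⬝ᵥ u := by
      intro u
      apply Finset.sum_congr rfl
      intro j _
      rw [Real.norm_eq_abs, sq_abs, sq]
    rw [EuclideanSpace.norm_eq, EuclideanSpace.norm_eq]
    apply Real.sqrt_le_sqrt
    rw [hnorm, hnorm]
    exact h1
end
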